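/- arXiv:2602.13077 — 5 statements merged into one kernel-verified Lean document; each statement's English description precedes it below -/
import Mathlib

section
/- If M is a full set of successor type, then there is a transitive set X ∈ M that is a maximal cardinality of M. -/
namespace NairianModels

open ZFSet

/-! ## Basic cardinality notions -/

/-- `f` codes a surjection from `X` onto `Y`: a set of Kuratowski ordered pairs that is a
function with domain `X` and values in `Y`, every element of `Y` being a value. -/
def ZFSurj (X Y f : ZFSet) : Prop :=
  ZFSet.IsFunc X Y f ∧ ∀ y ∈ Y, ∃ x ∈ X, ZFSet.pair x y ∈ f

/-- `|X| ≲ |Y|`: either `X = ∅` or there is a surjection from `Y` onto `X`. -/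
def CardLE (X Y : ZFSet) : Prop :=
  X = ∅ ∨ ∃ f, ZFSurj Y X f

/-- `|X| ≈ |Y|`. -/
def CardEq (X Y : ZFSet) : Prop :=
  CardLE X Y ∧ CardLE Y X

/-- `X` is a maximal cardinality of `M`: `X ∈ M` and every nonempty `Y ∈ M` is the image of a
surjection from `X` that belongs to `M`. -/
def IsMaxCard (X M : ZFSet) : Prop :=
  X ∈ M ∧ ∀ Y ∈ M, Y = ∅ ∨ ∃ f ∈ M, ZFSurj X Y f

/-- `M` is of successor type: it has a maximal cardinality. -/
def SuccType (M : ZFSet) : Prop :=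
  ∃ X, IsMaxCard X M

/-! ## Fullness -/

def TransClosed (M : ZFSet) : Prop :=
  ∀ Y ∈ M, ∃ Z ∈ M, Z.IsTransitive ∧ Z ⊆ M ∧ Y ∈ Z

def ProdClosed (M : ZFSet) : Prop :=
  ∀ X ∈ M, ∀ Y ∈ M, ZFSet.prod X Y ∈ M

def SubsetClosed (M : ZFSet) : Prop :=
  ∀ X ∈ M, ZFSet.powerset X ⊆ M

def Full (M : ZFSet) : Prop :=
  TransClosed M ∧ ProdClosed M ∧ SubsetClosed M

/-! ## Ordinals, strong regularity, hierarchicality, H-likeness -/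

/-- von Neumann ordinal: a transitive set linearly ordered by `∈`. -/
def IsOrd (x : ZFSet) : Prop :=
  x.IsTransitive ∧
    (∀ y ∈ x, ∀ z ∈ x, y ∈ z ∨ y = z ∨ z ∈ y) ∧
    (∀ a ∈ x, ∀ b ∈ x, ∀ c ∈ x, a ∈ b → b ∈ c → a ∈ c)

/-- limit (von Neumann) ordinal: a nonempty ordinal with no largest element. -/
def IsLimitOrd (x : ZFSet) : Prop :=
  IsOrd x ∧ x ≠ ∅ ∧ ∀ y ∈ x, ∃ z ∈ x, y ∈ z

/-- `M` is strongly regular: any (set-coded) function from an `X ∈ M` to the ordinals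
belonging to `M` is bounded by an ordinal in `M`. -/
def StronglyRegular (M : ZFSet) : Prop :=
  ∀ X ∈ M, ∀ f : ZFSet,
    (∀ p ∈ f, ∃ x ∈ X, ∃ o, IsOrd o ∧ o ∈ M ∧ p = ZFSet.pair x o) →
    (∀ x ∈ X, ∃ o, ZFSet.pair x o ∈ f) →
    (∀ x ∈ X, ∀ o o', ZFSet.pair x o ∈ f → ZFSet.pair x o' ∈ f → o = o') →
    ∃ β, IsOrd β ∧ β ∈ M ∧ ∀ x ∈ X, ∀ o, ZFSet.pair x o ∈ f → o ∈ β

/-- `M` is hierarchical: it is the continuous increasing union, along the ordinals belonging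
to `M`, of transitive sets belonging to `M`. -/
def Hierarchical (M : ZFSet) : Prop :=
  ∃ F : ZFSet → ZFSet,
    (∀ α, IsOrd α → α ∈ M → (F α).IsTransitive ∧ F α ∈ M) ∧
    (∀ α β, IsOrd α → IsOrd β → α ∈ M → β ∈ M → α ∈ β → F α ⊆ F β) ∧
    (∀ β, IsLimitOrd β → β ∈ M → ∀ x, x ∈ F β ↔ ∃ α ∈ β, x ∈ F α) ∧
    (∀ x, x ∈ M ↔ ∃ α, IsOrd α ∧ α ∈ M ∧ x ∈ F α)

/-- `M` is H-like: transitive, full, hierarchical, and strongly regular in case it is of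
successor type. -/
def HLike (M : ZFSet) : Prop :=
  M.IsTransitive ∧ Full M ∧ Hierarchical M ∧ (SuccType M → StronglyRegular M)

/-! ## Transitive closure and the classes `H_X` -/

/-- Iterated unions: `iterUnion x n = ⋃ⁿ x`. -/
def iterUnion (x : ZFSet) : ℕ → ZFSet
  | 0 => x
  | n + 1 => ZFSet.sUnion (iterUnion x n)

/-- The transitive closure of `x` (the least transitive set including `x`):
`x ∪ ⋃x ∪ ⋃⋃x ∪ ⋯`. -/
noncomputable def transCl (x : ZFSet) : ZFSet :=
  ZFSet.sUnion (ZFSet.range fun n : ℕ => iterUnion x n)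

/-- `Y ∈ H_X`: there is a surjection from `X` onto the transitive closure of `{Y}`. -/
def MemH (X Y : ZFSet) : Prop :=
  ∃ f, ZFSurj X (transCl ({Y} : ZFSet)) f

/-! ## First-order logic over `(W, ∈)` -/

/-- Formulas of the language of set theory, with variables indexed by `ℕ`. -/
inductive Fml : Type
  | mem : ℕ → ℕ → Fml
  | equal : ℕ → ℕ → Fml
  | not : Fml → Fml
  | and : Fml → Fml → Fml
  | ex : ℕ → Fml → Fml

/-- Satisfaction of a formula in the structure `(D, ∈)` under the assignment `v`. -/
def Sat (D : ZFSet) : Fml → (ℕ → ZFSet) → Prop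
  | .mem i j, v => v i ∈ v j
  | .equal i j, v => v i = v j
  | .not φ, v => ¬ Sat D φ v
  | .and φ ψ, v => Sat D φ v ∧ Sat D ψ v
  | .ex n φ, v => ∃ a, a ∈ D ∧ Sat D φ (Function.update v n a)

/-- `(X, ∈)` is an elementary substructure of `(W, ∈)`. -/
def ElemSub (X W : ZFSet) : Prop :=
  X ⊆ W ∧ ∀ (φ : Fml) (v : ℕ → ZFSet), (∀ n, v n ∈ X) → (Sat X φ v ↔ Sat W φ v)

/-- `π` is an elementary embedding of `(M, ∈)` into `(W, ∈)`. -/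
def IsElemEmb (M W : ZFSet) (π : ZFSet → ZFSet) : Prop :=
  (∀ x ∈ M, π x ∈ W) ∧
    ∀ (φ : Fml) (v : ℕ → ZFSet), (∀ n, v n ∈ M) →
      (Sat M φ v ↔ Sat W φ fun n => π (v n))

/-- `M` is `X`-closed: `X ∪ {X} ⊆ M` and every (set-coded) function from `X` into `M`
belongs to `M`. -/
def XClosed (X M : ZFSet) : Prop :=
  X ⊆ M ∧ X ∈ M ∧ ∀ f, ZFSet.IsFunc X M f → f ∈ M

/-- `M` is definably closed: any subset of a transitive `N ∈ M` definable over `(N, ∈)` with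
parameters in `N` belongs to `M`. -/
def DefClosed (M : ZFSet) : Prop :=
  ∀ N, N ∈ M → N.IsTransitive →
    ∀ (φ : Fml) (v : ℕ → ZFSet), (∀ n, v n ∈ N) →
      ∀ A : ZFSet, (∀ y, y ∈ A ↔ y ∈ N ∧ Sat N φ (Function.update v 0 y)) → A ∈ M

/-- The reflection principle `ref(X, Y, Z)`. -/
def Ref (X Y Z : ZFSet) : Prop :=
  ∀ W a : ZFSet, W.IsTransitive → XClosed X W → Y ∈ W → a ∈ W →
    ∃ (M : ZFSet) (π : ZFSet → ZFSet),
      M.IsTransitive ∧ IsElemEmb M W π ∧ ({X, Y} : ZFSet) ∈ M ∧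
      (∃ x ∈ M, π x = a) ∧ M ∈ Z ∧
      (∀ z, z ∈ X ∨ z ∈ Y ∨ z = X ∨ z = Y → π z = z) ∧ XClosed X M

/-! ## The N-hierarchy -/

/-- Hereditarily finite sets. -/
def HFin : ZFSet → Prop :=
  ZFSet.mem_wf.fix (C := fun _ => Prop) fun x IH =>
    x.toSet.Finite ∧ ∀ y, ∀ h : y ∈ x, IH y h

/-- `F` is the N-hierarchy: `F 0` is the set of hereditarily finite sets, `F 1 = H_{F 0}`,
`F (α+2) = H_{F (α+1)}`, and for limit `α`, `F α = ⋃_{β<α} F β` and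
`F (α+1) = H_{𝒫(F α)}`. -/
def IsNHierarchy (F : Ordinal → ZFSet) : Prop :=
  (∀ Y, Y ∈ F 0 ↔ HFin Y) ∧
  (∀ Y, Y ∈ F 1 ↔ MemH (F 0) Y) ∧
  (∀ α : Ordinal, ∀ Y, Y ∈ F (α + 2) ↔ MemH (F (α + 1)) Y) ∧
  (∀ α : Ordinal, Order.IsSuccLimit α →
    (∀ Y, Y ∈ F α ↔ ∃ β < α, Y ∈ F β) ∧
    (∀ Y, Y ∈ F (α + 1) ↔ MemH (ZFSet.powerset (F α)) Y))

/-! ## Auxiliary product constructions -/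

/-- Left-nested cartesian product `Y 0 × Y 1 × ⋯ × Y n`. -/
def nestedProd (Y : ℕ → ZFSet) : ℕ → ZFSet
  | 0 => Y 0
  | n + 1 => ZFSet.prod (nestedProd Y n) (Y (n + 1))

/-- Left-nested cartesian power `X^n` (with junk value `∅` at `n = 0`). -/
def nPow (X : ZFSet) : ℕ → ZFSet
  | 0 => ∅
  | 1 => X
  | n + 2 => ZFSet.prod (nPow X (n + 1)) X

/-- `W` is `<κ`-closed: every function from an ordinal `η < κ` into `W` belongs to `W`. -/
def LtClosed (κ W : ZFSet) : Prop :=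
  ∀ η ∈ κ, ∀ f, ZFSet.IsFunc η W f → f ∈ W

/-! ## Statement 0 -/

/-! A transitive `Z ∈ M` containing a maximal cardinality `X` is again one: a surjection
`X → Y` extends to `Z` by a constant on `Z \ X`, and the extension lies in `M` as a subset
of `Z × Y`. -/

theorem isFunc_union_prod_sdiff {X Y Z f y₀ : ZFSet} (hXZ : X ⊆ Z) (hf : IsFunc X Y f)
    (hy₀ : y₀ ∈ Y) : IsFunc Z Y (f ∪ prod (Z \ X) {y₀}) := by
  obtain ⟨hfXY, hfun⟩ := hf
  refine ⟨fun p hp => ?_, fun z hz => ?_⟩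
  · rcases mem_union.mp hp with hpf | hpc
    · obtain ⟨a, ha, b, hb, rfl⟩ := mem_prod.mp (hfXY hpf)
      exact pair_mem_prod.mpr ⟨hXZ ha, hb⟩
    · obtain ⟨a, ha, b, hb, rfl⟩ := mem_prod.mp hpc
      exact pair_mem_prod.mpr ⟨(mem_sdiff.mp ha).1, mem_singleton.mp hb ▸ hy₀⟩
  have mem_graph : ∀ w,
      pair z w ∈ f ∪ prod (Z \ X) {y₀} ↔ pair z w ∈ f ∨ (z ∉ X ∧ w = y₀) := fun w => by
    simp only [mem_union, pair_mem_prod, mem_sdiff, mem_singleton, hz, true_and]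
  by_cases hzX : z ∈ X
  · obtain ⟨w, hw, huniq⟩ := hfun z hzX
    exact ⟨w, (mem_graph w).mpr (.inl hw), fun w' hw' =>
      ((mem_graph w').mp hw').elim (huniq w') fun h => absurd hzX h.1⟩
  · have hzf : ∀ w, pair z w ∉ f := fun w h => hzX (pair_mem_prod.mp (hfXY h)).1
    exact ⟨y₀, (mem_graph y₀).mpr (.inr ⟨hzX, rfl⟩), fun w' hw' =>
      ((mem_graph w').mp hw').elim (fun h => absurd h (hzf w')) And.right⟩

theorem ZFSurj.union_prod_sdiff {X Y Z f y₀ : ZFSet} (hXZ : X ⊆ Z) (hf : ZFSurj X Y f)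
    (hy₀ : y₀ ∈ Y) : ZFSurj Z Y (f ∪ prod (Z \ X) {y₀}) :=
  ⟨isFunc_union_prod_sdiff hXZ hf.1 hy₀, fun y hy =>
    let ⟨x, hx, hxy⟩ := hf.2 y hy
    ⟨x, hXZ hx, mem_union.mpr (.inl hxy)⟩⟩

theorem mem_of_subset_prod {M X Y f : ZFSet} (hProd : ProdClosed M) (hSub : SubsetClosed M)
    (hX : X ∈ M) (hY : Y ∈ M) (hf : f ⊆ prod X Y) : f ∈ M :=
  hSub _ (hProd X hX Y hY) (mem_powerset.mpr hf)

theorem IsMaxCard.of_subset {M X Z : ZFSet} (hProd : ProdClosed M) (hSub : SubsetClosed M)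
    (hX : IsMaxCard X M) (hZ : Z ∈ M) (hXZ : X ⊆ Z) : IsMaxCard Z M := by
  refine ⟨hZ, fun Y hY => ?_⟩
  rcases eq_empty_or_nonempty Y with hY₀ | ⟨y₀, hy₀⟩
  · exact .inl hY₀
  rcases hX.2 Y hY with hY₀ | ⟨f, -, hf⟩
  · exact .inl hY₀
  have hg := hf.union_prod_sdiff hXZ hy₀
  exact .inr ⟨_, mem_of_subset_prod hProd hSub hZ hY hg.1.1, hg⟩

theorem stmt0 (M : ZFSet) (hFull : Full M) (hSucc : SuccType M) :
    ∃ X : ZFSet, X.IsTransitive ∧ IsMaxCard X M := by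
  obtain ⟨hTrans, hProd, hSub⟩ := hFull
  obtain ⟨X, hX⟩ := hSucc
  obtain ⟨Z, hZM, hZ, -, hXZ⟩ := hTrans X hX.1
  exact ⟨Z, hZ, hX.of_subset hProd hSub hZM (hZ X hXZ)⟩

end NairianModels
end

section
/- Suppose M is a full set. Then: (i) for every n ∈ ω and every sequence Y_0, …, Y_n of elements of M, every subset of the (left-nested) cartesian product Y_0 × ⋯ × Y_n belongs to M; and (ii) if X ∈ M is transitive and a maximal cardinality of M, then |M| ≈ |𝒫(X)|. -/
/-!
Part (i) is immediate: nested products of members of `M` lie in `M`, and so do their subsets.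

For (ii), `𝒫(X) ⊆ M` gives `|𝒫(X)| ≲ |M|`. Conversely, every `Y ∈ M` lies in a transitive
`Z ∈ M`, and `X` maps onto `Z`; pulling `∈` back along that map gives a well-founded relation on
`X` whose Mostowski collapse sends a fixed base point of `X` to `Y`. As `X` also maps onto `X × X`,
such relations are images of subsets of `X`, so "collapse the image of `A` at the base point" maps
`𝒫(X)` onto `M`.
-/

namespace NairianModels

open ZFSet

attribute [local instance] Classical.allZFSetDefinable

section Surjections

variable {X Y : ZFSet} {g : ZFSet → ZFSet}

theorem cardLE_of_surjOn (hg : Set.SurjOn g X Y) : CardLE Y X := by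
  classical
  rcases Y.eq_empty_or_nonempty with hY | ⟨y₀, hy₀⟩
  · exact .inl hY
  refine .inr ⟨map (fun x => if g x ∈ Y then g x else y₀) X,
    map_isFunc.2 fun x _ => ?_, fun y hy => ?_⟩
  · split_ifs with h
    exacts [h, hy₀]
  · obtain ⟨x, hx, rfl⟩ := hg hy
    exact ⟨x, hx, mem_map.2 ⟨x, hx, by rw [if_pos hy]⟩⟩

theorem ZFSurj.exists_surjOn {f : ZFSet} (hf : ZFSurj X Y f) :
    ∃ g : ZFSet → ZFSet, Set.MapsTo g X Y ∧ Set.SurjOn g X Y := by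
  obtain ⟨⟨hfXY, hfun⟩, hsurj⟩ := hf
  choose! g hg hg_unique using hfun
  refine ⟨g, fun x hx => (pair_mem_prod.1 (hfXY (hg x hx))).2, fun y hy => ?_⟩
  obtain ⟨x, hx, hxy⟩ := hsurj y hy
  exact ⟨x, hx, (hg_unique x hx y hxy).symm⟩

theorem exists_subset_image_eq {W R : ZFSet} {u : ZFSet → ZFSet} (hu : Set.SurjOn u X W)
    (hR : R ⊆ W) : ∃ A ⊆ X, image u A = R := by
  refine ⟨ZFSet.sep (fun x => u x ∈ R) X, fun x hx => (ZFSet.mem_sep.1 hx).1, ?_⟩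
  ext q
  simp only [mem_image, ZFSet.mem_sep]
  constructor
  · rintro ⟨x, ⟨-, hx⟩, rfl⟩
    exact hx
  · intro hq
    obtain ⟨x, hx, rfl⟩ := hu (hR hq)
    exact ⟨x, ⟨hx, hq⟩, rfl⟩

end Surjections

section MaxCard

variable {X Y M : ZFSet}

theorem IsMaxCard.exists_surjOn (hX : IsMaxCard X M) (hY : Y ∈ M) (hne : Y.Nonempty) :
    ∃ g : ZFSet → ZFSet, Set.MapsTo g X Y ∧ Set.SurjOn g X Y := by
  obtain h | ⟨f, -, hf⟩ := hX.2 Y hY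
  · exact absurd (h ▸ hne) ZFSet.not_nonempty_empty
  · exact hf.exists_surjOn

theorem IsMaxCard.nonempty (hT : TransClosed M) (hX : IsMaxCard X M) : X.Nonempty := by
  obtain ⟨Z, hZM, -, -, hXZ⟩ := hT X hX.1
  obtain ⟨g, -, hg⟩ := hX.exists_surjOn hZM ⟨X, hXZ⟩
  obtain ⟨x, hx, -⟩ := hg hXZ
  exact ⟨x, hx⟩

end MaxCard

section Collapse

variable {R X Z : ZFSet} {g : ZFSet → ZFSet}

def predecessors (R x : ZFSet) : ZFSet :=
  ZFSet.sep (fun a => pair a x ∈ R) (⋃₀ ⋃₀ R)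

theorem mem_predecessors {x a : ZFSet} : a ∈ predecessors R x ↔ pair a x ∈ R := by
  refine ZFSet.mem_sep.trans ⟨And.right, fun h => ⟨?_, h⟩⟩
  exact mem_sUnion.2 ⟨{a}, mem_sUnion.2 ⟨_, h, by simp [pair]⟩, mem_singleton.2 rfl⟩

open scoped Classical in
noncomputable def collapse (R : ZFSet) : ZFSet → ZFSet :=
  if h : WellFounded (fun a b => pair a b ∈ R) then
    h.fix fun x IH => image (fun a => if ha : pair a x ∈ R then IH a ha else ∅) (predecessors R x)
  else fun _ => ∅

theorem mem_collapse (hR : WellFounded (fun a b => pair a b ∈ R)) {x y : ZFSet} :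
    y ∈ collapse R x ↔ ∃ a, pair a x ∈ R ∧ collapse R a = y := by
  rw [collapse, dif_pos hR, WellFounded.fix_eq, mem_image]
  simp only [mem_predecessors]
  constructor
  · rintro ⟨a, ha, rfl⟩
    exact ⟨a, ha, by rw [dif_pos ha]⟩
  · rintro ⟨a, ha, rfl⟩
    exact ⟨a, ha, by rw [dif_pos ha]⟩

theorem collapse_eq_of_surjOn (hZ : Z.IsTransitive) (hmaps : Set.MapsTo g X Z)
    (hsurj : Set.SurjOn g X Z) (hR : ∀ a b, pair a b ∈ R ↔ a ∈ X ∧ b ∈ X ∧ g a ∈ g b)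
    {x : ZFSet} (hx : x ∈ X) : collapse R x = g x := by
  have hwf : WellFounded (fun a b => pair a b ∈ R) :=
    Subrelation.wf (fun hab => ((hR _ _).1 hab).2.2) (InvImage.wf g ZFSet.mem_wf)
  induction x using hwf.induction with
  | _ x IH =>
    ext y
    rw [mem_collapse hwf]
    constructor
    · rintro ⟨a, haR, rfl⟩
      obtain ⟨ha, -, hax⟩ := (hR a x).1 haR
      rwa [IH a haR ha]
    · intro hy
      obtain ⟨a, ha, rfl⟩ := hsurj (hZ.mem_trans hy (hmaps hx))
      have haR : pair a x ∈ R := (hR a x).2 ⟨ha, hx, hy⟩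
      exact ⟨a, haR, IH a haR ha⟩

open scoped Classical in
theorem exists_collapse_eq (hZ : Z.IsTransitive) (hmaps : Set.MapsTo g X Z)
    (hsurj : Set.SurjOn g X Z) {x₀ y : ZFSet} (hx₀ : x₀ ∈ X) (hy : y ∈ Z) :
    ∃ R ⊆ prod X X, collapse R x₀ = y := by
  obtain ⟨p, hp, rfl⟩ := hsurj hy
  -- precompose with a transposition so that the base point `x₀` is sent to `g p`
  set σ : ZFSet ≃ ZFSet := Equiv.swap x₀ p
  have hσ : Set.MapsTo σ X X := fun a ha => by
    simp only [σ, Equiv.swap_apply_def]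
    split_ifs <;> assumption
  have hgσ_maps : Set.MapsTo (g ∘ σ) X Z := hmaps.comp hσ
  have hgσ_surj : Set.SurjOn (g ∘ σ) X Z :=
    hsurj.comp fun a ha => ⟨σ a, hσ ha, Equiv.swap_apply_self _ _ _⟩
  refine ⟨pairSep (fun a b => g (σ a) ∈ g (σ b)) X X, fun q hq => ?_, ?_⟩
  · obtain ⟨a, ha, b, hb, rfl, -⟩ := mem_pairSep.1 hq
    exact pair_mem_prod.2 ⟨ha, hb⟩
  · rw [collapse_eq_of_surjOn hZ hgσ_maps hgσ_surj (fun a b => by simp) hx₀]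
    simp [σ]

end Collapse

theorem nestedProd_mem {M : ZFSet} (hM : ProdClosed M) {Y : ℕ → ZFSet} :
    ∀ {n}, (∀ i ≤ n, Y i ∈ M) → nestedProd Y n ∈ M
  | 0, hY => hY 0 le_rfl
  | n + 1, hY => hM _ (nestedProd_mem hM fun i hi => hY i (hi.trans n.le_succ)) _ (hY _ le_rfl)

theorem IsMaxCard.cardLE_powerset {M X : ZFSet} (hT : TransClosed M) (hP : ProdClosed M)
    (hX : IsMaxCard X M) : CardLE M (powerset X) := by
  obtain ⟨x₀, hx₀⟩ := hX.nonempty hT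
  obtain ⟨u, -, hu⟩ := hX.exists_surjOn (hP X hX.1 X hX.1)
    ⟨pair x₀ x₀, pair_mem_prod.2 ⟨hx₀, hx₀⟩⟩
  refine cardLE_of_surjOn (g := fun A => collapse (image u A) x₀) fun Y hY => ?_
  obtain ⟨Z, hZM, hZ, -, hYZ⟩ := hT Y hY
  obtain ⟨g, hgm, hgs⟩ := hX.exists_surjOn hZM ⟨Y, hYZ⟩
  obtain ⟨R, hRX, hR⟩ := exists_collapse_eq hZ hgm hgs hx₀ hYZ
  obtain ⟨A, hAX, hA⟩ := exists_subset_image_eq hu hRX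
  exact ⟨A, mem_powerset.2 hAX, by simp only [hA, hR]⟩

theorem SubsetClosed.powerset_cardLE {M X : ZFSet} (hS : SubsetClosed M) (hX : X ∈ M) :
    CardLE (powerset X) M :=
  cardLE_of_surjOn (g := id) fun A hA => ⟨A, hS X hX hA, rfl⟩

theorem stmt1 (M : ZFSet) (hFull : Full M) :
    (∀ (n : ℕ) (Y : ℕ → ZFSet), (∀ i ≤ n, Y i ∈ M) →
      ∀ A : ZFSet, A ⊆ nestedProd Y n → A ∈ M) ∧
    (∀ X : ZFSet, X.IsTransitive → IsMaxCard X M →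
      CardEq M (ZFSet.powerset X)) :=
  ⟨fun _ _ hY _ hA => hFull.2.2 _ (nestedProd_mem hFull.2.1 hY) (mem_powerset.2 hA),
    fun _ _ hX => ⟨hX.cardLE_powerset hFull.1 hFull.2.1, hFull.2.2.powerset_cardLE hX.1⟩⟩

end NairianModels
end

section
/- If M is an H-like set and X is a maximal cardinality of M, then M = H_X; that is, a set Y belongs to M if and only if there is a surjection from X onto the transitive closure of {Y}. -/
namespace NairianModels

open ZFSet

/-! For `Y ∈ M`, fullness puts the transitive closure of `{Y}` into `M`, so the maximal
cardinality `X` maps onto it. Conversely, by `∈`-induction every element of a `Y ∈ H_X` lies in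
`M`; `X` maps onto `Y`, strong regularity bounds the hierarchy stages of the images by a single
stage `F β ∈ M`, and `Y ⊆ F β` lies in `M` by subset closure. -/

theorem mem_transCl_iff {x z : ZFSet} : z ∈ transCl x ↔ ∃ n, z ∈ iterUnion x n := by
  simp only [transCl, mem_sUnion, mem_range]
  constructor
  · rintro ⟨t, ⟨n, rfl⟩, hz⟩
    exact ⟨n, hz⟩
  · rintro ⟨n, hz⟩
    exact ⟨_, ⟨n, rfl⟩, hz⟩

theorem subset_transCl (x : ZFSet) : x ⊆ transCl x := fun _ hz =>
  mem_transCl_iff.2 ⟨0, hz⟩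

theorem isTransitive_transCl (x : ZFSet) : (transCl x).IsTransitive := by
  intro y hy a ha
  obtain ⟨n, hn⟩ := mem_transCl_iff.1 hy
  exact mem_transCl_iff.2 ⟨n + 1, mem_sUnion.2 ⟨y, hn, ha⟩⟩

theorem iterUnion_subset {T x : ZFSet} (hT : T.IsTransitive) (hx : x ⊆ T) :
    ∀ n, iterUnion x n ⊆ T
  | 0 => hx
  | n + 1 => fun _ ha => by
    obtain ⟨b, hb, hab⟩ := mem_sUnion.1 ha
    exact hT b (iterUnion_subset hT hx n hb) hab

theorem transCl_subset {T x : ZFSet} (hT : T.IsTransitive) (hx : x ⊆ T) : transCl x ⊆ T :=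
  fun _ hz => by
    obtain ⟨n, hn⟩ := mem_transCl_iff.1 hz
    exact iterUnion_subset hT hx n hn

theorem mem_transCl_singleton_self (Y : ZFSet) : Y ∈ transCl ({Y} : ZFSet) :=
  subset_transCl _ (mem_singleton.2 rfl)

theorem transCl_singleton_subset {Y Z : ZFSet} (hZ : Z.IsTransitive) (hY : Y ∈ Z) :
    transCl ({Y} : ZFSet) ⊆ Z :=
  transCl_subset hZ fun _ ha => mem_singleton.1 ha ▸ hY

theorem subset_transCl_singleton (Y : ZFSet) : Y ⊆ transCl ({Y} : ZFSet) :=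
  isTransitive_transCl _ Y (mem_transCl_singleton_self Y)

theorem exists_zfSurj_iff {X Y : ZFSet} :
    (∃ f, ZFSurj X Y f) ↔
      ∃ v : ZFSet → ZFSet, (∀ x ∈ X, v x ∈ Y) ∧ ∀ y ∈ Y, ∃ x ∈ X, v x = y := by
  constructor
  · rintro ⟨f, hfun, hsurj⟩
    choose! v hv using hfun.2
    refine ⟨v, fun x hx => (pair_mem_prod.1 (hfun.1 (hv x hx).1)).2, fun y hy => ?_⟩
    obtain ⟨x, hx, hxy⟩ := hsurj y hy
    exact ⟨x, hx, ((hv x hx).2 y hxy).symm⟩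
  · rintro ⟨v, hvY, hv⟩
    have : Definable₁ v := Classical.allZFSetDefinable _
    refine ⟨map v X, map_isFunc.2 hvY, fun y hy => ?_⟩
    obtain ⟨x, hx, rfl⟩ := hv y hy
    exact ⟨x, hx, mem_map.2 ⟨x, hx, rfl⟩⟩

theorem exists_zfSurj_of_subset {X T S : ZFSet} (hT : ∃ f, ZFSurj X T f) (hST : S ⊆ T)
    (hS : S.Nonempty) : ∃ g, ZFSurj X S g := by
  classical
  obtain ⟨v, -, hv⟩ := exists_zfSurj_iff.1 hT
  obtain ⟨s₀, hs₀⟩ := (nonempty_def S).1 hS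
  refine exists_zfSurj_iff.2
    ⟨fun x => if v x ∈ S then v x else s₀, fun x _ => by dsimp only; split_ifs <;> assumption, fun y hy => ?_⟩
  obtain ⟨x, hx, rfl⟩ := hv y (hST hy)
  exact ⟨x, hx, if_pos hy⟩

theorem MemH.of_mem {X Y y : ZFSet} (hY : MemH X Y) (hy : y ∈ Y) : MemH X y :=
  exists_zfSurj_of_subset hY
    (transCl_singleton_subset (isTransitive_transCl _) (subset_transCl_singleton Y hy))
    ⟨y, mem_transCl_singleton_self y⟩

theorem MemH.exists_zfSurj {X Y : ZFSet} (hY : MemH X Y) (hne : Y.Nonempty) :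
    ∃ g, ZFSurj X Y g :=
  exists_zfSurj_of_subset hY (subset_transCl_singleton Y) hne

theorem SubsetClosed.empty_mem {M X : ZFSet} (hSC : SubsetClosed M) (hX : X ∈ M) : ∅ ∈ M :=
  hSC X hX (mem_powerset.2 (empty_subset X))

theorem StronglyRegular.exists_ord_bound {M X : ZFSet} (hSR : StronglyRegular M) (hX : X ∈ M)
    (o : ZFSet → ZFSet) (ho : ∀ x ∈ X, IsOrd (o x) ∧ o x ∈ M) :
    ∃ β, IsOrd β ∧ β ∈ M ∧ ∀ x ∈ X, o x ∈ β := by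
  have : Definable₁ o := Classical.allZFSetDefinable _
  obtain ⟨β, hβ, hβM, hbound⟩ := hSR X hX (map o X)
    (fun p hp => by
      obtain ⟨x, hx, rfl⟩ := mem_map.1 hp
      exact ⟨x, hx, o x, (ho x hx).1, (ho x hx).2, rfl⟩)
    (fun x hx => ⟨o x, mem_map.2 ⟨x, hx, rfl⟩⟩)
    (fun x _ a b ha hb => by
      obtain ⟨z, -, hz⟩ := mem_map.1 ha
      obtain ⟨w, -, hw⟩ := mem_map.1 hb
      obtain ⟨rfl, rfl⟩ := pair_injective hz
      obtain ⟨rfl, rfl⟩ := pair_injective hw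
      rfl)
  exact ⟨β, hβ, hβM, fun x hx => hbound x hx (o x) (mem_map.2 ⟨x, hx, rfl⟩)⟩

theorem StronglyRegular.mem_of_zfSurj {M X Y : ZFSet} (hSR : StronglyRegular M)
    (hH : Hierarchical M) (hSC : SubsetClosed M) (hX : X ∈ M) (hYM : Y ⊆ M)
    (hXY : ∃ g, ZFSurj X Y g) : Y ∈ M := by
  obtain ⟨F, hFmem, hFmono, -, hFcover⟩ := hH
  obtain ⟨v, hvY, hv⟩ := exists_zfSurj_iff.1 hXY
  have hstage : ∀ x ∈ X, ∃ α, IsOrd α ∧ α ∈ M ∧ v x ∈ F α := fun x hx =>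
    (hFcover (v x)).1 (hYM (hvY x hx))
  choose! o ho using hstage
  obtain ⟨β, hβ, hβM, hoβ⟩ :=
    hSR.exists_ord_bound hX o fun x hx => ⟨(ho x hx).1, (ho x hx).2.1⟩
  refine hSC (F β) (hFmem β hβ hβM).2 (mem_powerset.2 fun y hy => ?_)
  obtain ⟨x, hx, rfl⟩ := hv y hy
  exact hFmono _ _ (ho x hx).1 hβ (ho x hx).2.1 hβM (hoβ x hx) (ho x hx).2.2

theorem memH_of_mem {M X Y : ZFSet} (hTC : TransClosed M) (hSC : SubsetClosed M)
    (hX : IsMaxCard X M) (hY : Y ∈ M) : MemH X Y := by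
  obtain ⟨Z, hZM, hZ, -, hYZ⟩ := hTC Y hY
  have hclM : transCl ({Y} : ZFSet) ∈ M :=
    hSC Z hZM (mem_powerset.2 (transCl_singleton_subset hZ hYZ))
  obtain hempty | ⟨f, -, hf⟩ := hX.2 _ hclM
  · exact absurd (mem_transCl_singleton_self Y) (hempty ▸ notMem_empty Y)
  · exact ⟨f, hf⟩

theorem mem_of_memH {M X : ZFSet} (hSR : StronglyRegular M) (hH : Hierarchical M)
    (hSC : SubsetClosed M) (hX : X ∈ M) (Y : ZFSet) (hY : MemH X Y) : Y ∈ M := by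
  induction Y using ZFSet.inductionOn with
  | _ Y ih =>
    have hYM : Y ⊆ M := fun y hy => ih y hy (hY.of_mem hy)
    obtain rfl | hne := eq_empty_or_nonempty Y
    · exact hSC.empty_mem hX
    · exact hSR.mem_of_zfSurj hH hSC hX hYM (hY.exists_zfSurj hne)

theorem stmt2 (M X : ZFSet) (hM : HLike M) (hX : IsMaxCard X M) :
    ∀ Y : ZFSet, Y ∈ M ↔ ∃ f, ZFSurj X (transCl ({Y} : ZFSet)) f := by
  obtain ⟨-, ⟨hTC, -, hSC⟩, hH, hSR⟩ := hM
  exact fun Y => ⟨memH_of_mem hTC hSC hX, mem_of_memH (hSR ⟨X, hX⟩) hH hSC hX.1 Y⟩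

end NairianModels
end

section
/- Every H-like set M of successor type satisfies the closure properties expressing ZF minus Powerset: M is transitive; for all x, y ∈ M, {x, y} ∈ M; for all x ∈ M, ⋃x ∈ M; ω ∈ M; every subset of an element of M belongs to M; and (Replacement) for every Y ∈ M and every assignment F of an element F(y) ∈ M to each y ∈ Y, the image {F(y) : y ∈ Y} belongs to M. -/
namespace NairianModels

open ZFSet

/-!
Pairing, union and separation need only fullness. Strong regularity bounds every family of
ordinals of `M` indexed by an element of `M` by a single ordinal `β ∈ M`. For Replacement, bound
the hierarchy levels of the values `F y`: the image then lies in `M_β ∈ M`, so it belongs to `M`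
as a subset. For `ω`: the maximal cardinality `X` is infinite, because `X ∪ {X} ∈ M` is an
image of `X`; bounding a map of `X` onto the natural numbers gives `β ∈ M` with `ω ⊆ β`.
-/

theorem isOrd_of_isOrdinal {x : ZFSet} (hx : x.IsOrdinal) : IsOrd x :=
  ⟨hx.isTransitive, fun _ hy _ hz => (hx.mem hy).mem_trichotomous (hx.mem hz),
    fun _ _ _ _ _ hc hab hbc => (hx.mem hc).mem_trans hab hbc⟩

theorem mk_ofNat_eq_toZFSet (n : ℕ) : ZFSet.mk (PSet.ofNat n) = (n : Ordinal).toZFSet := by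
  induction n with
  | zero => simp only [Nat.cast_zero, Ordinal.toZFSet_zero]; rfl
  | succ n ih => rw [Nat.cast_succ, Ordinal.toZFSet_add_one, ← ih]; rfl

theorem exists_nat_eq_of_mem_omega {y : ZFSet} (hy : y ∈ omega) :
    ∃ n : ℕ, y = (n : Ordinal).toZFSet := by
  induction y using Quotient.inductionOn with
  | h p =>
    obtain ⟨⟨n⟩, hn⟩ := ZFSet.mk_mem_iff.1 hy
    exact ⟨n, (ZFSet.sound hn).trans (mk_ofNat_eq_toZFSet n)⟩

theorem ZFSurj.ncard_le {X Y f : ZFSet} (hf : ZFSurj X Y f) (hX : (X : Set ZFSet).Finite) :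
    (Y : Set ZFSet).ncard ≤ (X : Set ZFSet).ncard := by
  choose! g hg using fun x hx => (hf.1.2 x hx).exists
  have hY : (Y : Set ZFSet) ⊆ g '' (X : Set ZFSet) := by
    intro y hy
    obtain ⟨x, hx, hxy⟩ := hf.2 y hy
    exact ⟨x, hx, (hf.1.2 x hx).unique (hg x hx) hxy⟩
  exact (Set.ncard_le_ncard hY (hX.image g)).trans (Set.ncard_image_le hX)

theorem IsMaxCard.infinite {X M : ZFSet} (hX : IsMaxCard X M) (hXX : insert X X ∈ M) :
    (X : Set ZFSet).Infinite := by
  intro hfin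
  rcases hX.2 _ hXX with h | ⟨f, -, hf⟩
  · exact ZFSet.notMem_empty X (h ▸ ZFSet.mem_insert X X)
  · have := hf.ncard_le hfin
    rw [ZFSet.coe_insert, Set.ncard_insert_of_notMem (ZFSet.mem_irrefl X) hfin] at this
    omega

section Closure

variable {M : ZFSet}

theorem pair_mem (htr : M.IsTransitive) (hTC : TransClosed M) (hP : ProdClosed M)
    {x y : ZFSet} (hx : x ∈ M) (hy : y ∈ M) : ({x, y} : ZFSet) ∈ M := by
  obtain ⟨Z₁, hZ₁, -, -, hxZ₁⟩ := hTC x hx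
  obtain ⟨Z₂, hZ₂, -, -, hyZ₂⟩ := hTC y hy
  have hxy : ZFSet.pair x y ∈ M :=
    htr _ (hP Z₁ hZ₁ Z₂ hZ₂) (ZFSet.pair_mem_prod.2 ⟨hxZ₁, hyZ₂⟩)
  exact htr _ hxy (by simp [ZFSet.pair])

theorem sUnion_mem (hTC : TransClosed M) (hS : SubsetClosed M) {x : ZFSet} (hx : x ∈ M) :
    ⋃₀ x ∈ M := by
  obtain ⟨Z, hZ, hZtr, -, hxZ⟩ := hTC x hx
  exact hS Z hZ (ZFSet.mem_powerset.2 fun z hz =>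
    let ⟨w, hwx, hzw⟩ := ZFSet.mem_sUnion.1 hz
    hZtr w (hZtr x hxZ hwx) hzw)

theorem insert_mem (htr : M.IsTransitive) (hM : Full M) {x y : ZFSet} (hx : x ∈ M)
    (hy : y ∈ M) : insert x y ∈ M := by
  obtain ⟨hTC, hP, hS⟩ := hM
  have hsx : ({x} : ZFSet) ∈ M := by simpa using pair_mem htr hTC hP hx hx
  have : insert x y = ⋃₀ {{x}, y} := by ext; simp
  exact this ▸ sUnion_mem hTC hS (pair_mem htr hTC hP hsx hy)

theorem natCast_toZFSet_mem (htr : M.IsTransitive) (hM : Full M) (h₀ : (∅ : ZFSet) ∈ M)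
    (n : ℕ) : (n : Ordinal).toZFSet ∈ M := by
  induction n with
  | zero => simpa using h₀
  | succ n ih => simpa using insert_mem htr hM ih ih

theorem StronglyRegular.exists_bound (hSR : StronglyRegular M) {Y : ZFSet} (hY : Y ∈ M)
    (g : ZFSet → ZFSet) (hg : ∀ y ∈ Y, IsOrd (g y) ∧ g y ∈ M) :
    ∃ β, IsOrd β ∧ β ∈ M ∧ ∀ y ∈ Y, g y ∈ β := by
  have : ZFSet.Definable₁ fun y => ZFSet.pair y (g y) := Classical.allZFSetDefinable _
  have mem_graph : ∀ {p}, p ∈ ZFSet.image (fun y => ZFSet.pair y (g y)) Y ↔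
      ∃ y ∈ Y, ZFSet.pair y (g y) = p := ZFSet.mem_image
  obtain ⟨β, hβ, hβM, hbound⟩ := hSR Y hY _
    (fun p hp =>
      let ⟨y, hy, hp⟩ := mem_graph.1 hp
      ⟨y, hy, g y, (hg y hy).1, (hg y hy).2, hp.symm⟩)
    (fun y hy => ⟨g y, mem_graph.2 ⟨y, hy, rfl⟩⟩)
    (fun y _ o o' ho ho' => by
      obtain ⟨_, _, h⟩ := mem_graph.1 ho
      obtain ⟨_, _, h'⟩ := mem_graph.1 ho'
      obtain ⟨rfl, rfl⟩ := ZFSet.pair_injective h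
      obtain ⟨rfl, rfl⟩ := ZFSet.pair_injective h'
      rfl)
  exact ⟨β, hβ, hβM, fun y hy => hbound y hy _ (mem_graph.2 ⟨y, hy, rfl⟩)⟩

theorem omega_mem (hS : SubsetClosed M) (hSR : StronglyRegular M) {X : ZFSet} (hX : X ∈ M)
    (hXinf : (X : Set ZFSet).Infinite) (hnat : ∀ n : ℕ, (n : Ordinal).toZFSet ∈ M) :
    omega ∈ M := by
  let e : ℕ → ZFSet := fun n => hXinf.natEmbedding _ n
  have he : e.Injective := fun m n h => (hXinf.natEmbedding _).injective (Subtype.ext h)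
  obtain ⟨β, -, hβM, hbound⟩ :=
    hSR.exists_bound hX (fun x => ((Function.invFun e x : ℕ) : Ordinal).toZFSet) fun x _ =>
      ⟨isOrd_of_isOrdinal (ZFSet.isOrdinal_toZFSet _), hnat _⟩
  refine hS β hβM (ZFSet.mem_powerset.2 fun y hy => ?_)
  obtain ⟨n, rfl⟩ := exists_nat_eq_of_mem_omega hy
  simpa [Function.leftInverse_invFun he n] using hbound (e n) (hXinf.natEmbedding _ n).2

theorem exists_image_mem (hH : Hierarchical M) (hS : SubsetClosed M) (hSR : StronglyRegular M)
    {Y : ZFSet} (hY : Y ∈ M) (F : ZFSet → ZFSet) (hF : ∀ y ∈ Y, F y ∈ M) :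
    ∃ R ∈ M, ∀ z, z ∈ R ↔ ∃ y ∈ Y, z = F y := by
  obtain ⟨G, hGM, hGmono, -, hMG⟩ := hH
  choose! rk hrk using fun y hy => (hMG (F y)).1 (hF y hy)
  obtain ⟨β, hβ, hβM, hbound⟩ :=
    hSR.exists_bound hY rk fun y hy => ⟨(hrk y hy).1, (hrk y hy).2.1⟩
  have : ZFSet.Definable₁ F := Classical.allZFSetDefinable _
  refine ⟨ZFSet.image F Y, hS (G β) (hGM β hβ hβM).2 (ZFSet.mem_powerset.2 fun z hz => ?_),
    fun z => ZFSet.mem_image.trans (by simp only [eq_comm])⟩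
  obtain ⟨y, hy, rfl⟩ := ZFSet.mem_image.1 hz
  obtain ⟨hrkOrd, hrkM, hFy⟩ := hrk y hy
  exact hGmono _ β hrkOrd hβ hrkM hβM (hbound y hy) hFy

end Closure

theorem stmt3 (M : ZFSet) (hM : HLike M) (hSucc : SuccType M) :
    M.IsTransitive ∧
    (∀ x ∈ M, ∀ y ∈ M, ({x, y} : ZFSet) ∈ M) ∧
    (∀ x ∈ M, ZFSet.sUnion x ∈ M) ∧
    ZFSet.omega ∈ M ∧
    (∀ x ∈ M, ∀ A : ZFSet, A ⊆ x → A ∈ M) ∧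
    (∀ Y ∈ M, ∀ F : ZFSet → ZFSet, (∀ y ∈ Y, F y ∈ M) →
      ∃ R ∈ M, ∀ z, z ∈ R ↔ ∃ y ∈ Y, z = F y) := by
  obtain ⟨htr, hFull, hH, hSR⟩ := hM
  have ⟨hTC, hP, hS⟩ := hFull
  replace hSR := hSR hSucc
  obtain ⟨X, hX⟩ := hSucc
  have subset_mem : ∀ x ∈ M, ∀ A : ZFSet, A ⊆ x → A ∈ M := fun x hx A hA =>
    hS x hx (ZFSet.mem_powerset.2 hA)
  have hnat := natCast_toZFSet_mem htr hFull (subset_mem X hX.1 ∅ (ZFSet.empty_subset X))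
  have hXinf := hX.infinite (insert_mem htr hFull hX.1 hX.1)
  exact ⟨htr, fun x hx y hy => pair_mem htr hTC hP hx hy, fun x hx => sUnion_mem hTC hS hx,
    omega_mem hS hSR hX.1 hXinf hnat, subset_mem, fun Y hY => exists_image_mem hH hS hSR hY⟩

end NairianModels
end

section
/- Suppose κ is an infinite regular cardinal (a von Neumann ordinal such that no function from an ordinal α < κ into κ has range unbounded in κ) such that for all ordinals α < β < κ, |α^β| ≲ κ, where α^β denotes the set of all functions from β to α. Suppose W is a transitive <κ-closed set. Then for every A ⊆ κ there is a set X ⊆ W such that (X, ∈) is an elementary substructure of (W, ∈), A ⊆ X, |X| ≲ κ, and X is <κ-closed. (The paper proves this in ZF + DC_κ; in the ambient ZFC setting DC_κ is automatic.) -/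
namespace NairianModels

open ZFSet

/-!
The set `X` is the union of a chain `⟨X_α | α < κ⟩`: `X_α` is obtained from
`A ∪ ⋃_{β<α} X_β` by adding Skolem witnesses in `W` for all formulas with parameters in it, and
all sequences of length `< κ` with values in it (these lie in `W`, which is `<κ`-closed).
As `κ` is a limit, the Tarski–Vaught test shows that `X` is elementary in `W`; regularity of `κ`
puts every sequence of length `< κ` from `X` into a single `X_β`, hence into `X_{β+1}`.
Finally `κ^{<κ} = κ`, which follows from `|α^β| ≲ κ` and regularity, keeps every `X_α`, and
so `X`, of size at most `κ`.
-/

open Cardinal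

universe u

section Graph

variable {x y : ZFSet.{u}}

noncomputable def graph (g : x → ZFSet.{u}) : ZFSet.{u} :=
  range fun a : x => pair a (g a)

theorem pair_mem_graph {g : x → ZFSet.{u}} {a b : ZFSet.{u}} :
    pair a b ∈ graph g ↔ ∃ h : a ∈ x, g ⟨a, h⟩ = b := by
  simp only [graph, mem_range, pair_inj]
  constructor
  · rintro ⟨⟨a', ha'⟩, rfl, rfl⟩
    exact ⟨ha', rfl⟩
  · rintro ⟨ha, rfl⟩
    exact ⟨⟨a, ha⟩, rfl, rfl⟩

theorem isFunc_graph {g : x → ZFSet.{u}} (hg : ∀ a, g a ∈ y) : IsFunc x y (graph g) := by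
  refine ⟨fun p hp => ?_, fun a ha => ⟨g ⟨a, ha⟩, pair_mem_graph.2 ⟨ha, rfl⟩, ?_⟩⟩
  · obtain ⟨a, rfl⟩ := mem_range.1 hp
    exact pair_mem_prod.2 ⟨a.2, hg a⟩
  · rintro b hb
    obtain ⟨_, rfl⟩ := pair_mem_graph.1 hb
    rfl

theorem exists_graph_eq_of_isFunc {f : ZFSet.{u}} (hf : IsFunc x y f) :
    ∃ g : x → y, graph (fun a => (g a : ZFSet.{u})) = f := by
  choose g hg using fun a : x => hf.2 a a.2
  refine ⟨fun a => ⟨g a, (pair_mem_prod.1 (hf.1 (hg a).1)).2⟩, ?_⟩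
  ext p
  constructor
  · intro hp
    obtain ⟨a, rfl⟩ := mem_range.1 hp
    exact (hg a).1
  · intro hp
    obtain ⟨a, ha, b, -, rfl⟩ := mem_prod.1 (hf.1 hp)
    exact pair_mem_graph.2 ⟨ha, ((hg ⟨a, ha⟩).2 b hp).symm⟩

theorem graph_injective :
    Function.Injective fun g : x → y => graph fun a => (g a : ZFSet.{u}) := by
  intro g g' h
  funext a
  have : pair a (g' a : ZFSet) ∈ graph fun a => (g a : ZFSet) := by
    simp only at h
    exact h ▸ pair_mem_graph.2 ⟨a.2, rfl⟩
  obtain ⟨_, he⟩ := pair_mem_graph.1 this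
  exact Subtype.ext he

theorem mk_funs (x y : ZFSet.{u}) : #(funs x y) = #y ^ #x := by
  rw [power_def]
  refine (mk_congr (Equiv.ofBijective
    (fun g : x → y => (⟨graph fun a => (g a : ZFSet), ?_⟩ : funs x y)) ⟨?_, ?_⟩)).symm
  · exact mem_funs.2 (isFunc_graph fun a => (g a).2)
  · intro g g' h
    exact graph_injective (congrArg Subtype.val h)
  · rintro ⟨f, hf⟩
    obtain ⟨g, rfl⟩ := exists_graph_eq_of_isFunc (mem_funs.1 hf)
    exact ⟨g, rfl⟩

theorem cardLE_iff_mk_le : CardLE x y ↔ #x ≤ #y := by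
  constructor
  · rintro (rfl | ⟨f, hf, hsurj⟩)
    · simp
    obtain ⟨g, rfl⟩ := exists_graph_eq_of_isFunc hf
    refine mk_le_of_surjective (f := g) fun b => ?_
    obtain ⟨a, -, hab⟩ := hsurj b b.2
    obtain ⟨ha, he⟩ := pair_mem_graph.1 hab
    exact ⟨⟨a, ha⟩, Subtype.ext he⟩
  · intro h
    rcases x.eq_empty_or_nonempty with hx | ⟨b, hb⟩
    · exact Or.inl hx
    have : Nonempty x := ⟨⟨b, hb⟩⟩
    obtain ⟨e⟩ := h
    refine Or.inr ⟨graph fun a => (Function.invFun (⇑e) a).1,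
      isFunc_graph fun a => (Function.invFun (⇑e) a).2, fun b hb => ?_⟩
    refine ⟨e ⟨b, hb⟩, (e ⟨b, hb⟩).2, pair_mem_graph.2 ⟨(e ⟨b, hb⟩).2, ?_⟩⟩
    simp [Function.leftInverse_invFun e.injective _]

theorem IsFunc.mono {x y y' f : ZFSet.{u}} (hf : IsFunc x y f) (h : y ⊆ y') : IsFunc x y' f := by
  refine ⟨fun p hp => ?_, hf.2⟩
  obtain ⟨a, ha, b, hb, rfl⟩ := mem_prod.1 (hf.1 hp)
  exact pair_mem_prod.2 ⟨ha, h hb⟩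

end Graph

def IsRegularOrd (κ : ZFSet) : Prop :=
  ∀ α ∈ κ, ∀ f, IsFunc α κ f → ∃ β ∈ κ, ∀ x ∈ α, ∀ o, pair x o ∈ f → o ∈ β

theorem IsOrd.isOrdinal {x : ZFSet} (h : IsOrd x) : x.IsOrdinal :=
  ⟨h.1, fun hyz hzw hwx =>
    h.2.2 _ (h.1 _ (h.1 _ hwx hzw) hyz) _ (h.1 _ hwx hzw) _ hwx hyz hzw⟩

section Regular

variable {κ : ZFSet.{u}} (hκ : κ.IsOrdinal)

include hκ in
theorem _root_.ZFSet.IsOrdinal.empty_mem (hne : κ.Nonempty) : ∅ ∈ κ := by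
  rcases isOrdinal_empty.mem_trichotomous hκ with h | rfl | h
  · exact h
  · simp at hne
  · simp at h

theorem IsRegularOrd.exists_forall_mem (hReg : IsRegularOrd κ) {η : ZFSet.{u}} (hη : η ∈ κ)
    (G : η → ZFSet.{u}) (hG : ∀ a, G a ∈ κ) : ∃ β ∈ κ, ∀ a, G a ∈ β := by
  obtain ⟨β, hβ, hbound⟩ := hReg η hη (graph G) (isFunc_graph hG)
  exact ⟨β, hβ, fun a => hbound a a.2 (G a) (pair_mem_graph.2 ⟨a.2, rfl⟩)⟩

variable (hInf : (κ : Set ZFSet.{u}).Infinite) (hReg : IsRegularOrd κ)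

include hInf hReg in
theorem IsRegularOrd.exists_mem_of_mem {α : ZFSet.{u}} (hα : α ∈ κ) : ∃ β ∈ κ, α ∈ β := by
  obtain ⟨η, hη, hne⟩ := hInf.nontrivial.exists_ne ∅
  obtain ⟨a, ha⟩ := η.eq_empty_or_nonempty.resolve_left hne
  obtain ⟨β, hβ, hαβ⟩ := hReg.exists_forall_mem hη (fun _ => α) fun _ => hα
  exact ⟨β, hβ, hαβ ⟨a, ha⟩⟩

include hκ in
theorem _root_.ZFSet.IsOrdinal.exists_superset_superset {a b : ZFSet.{u}} (ha : a ∈ κ)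
    (hb : b ∈ κ) : ∃ c ∈ κ, a ⊆ c ∧ b ⊆ c := by
  rcases (hκ.mem ha).subset_total (hκ.mem hb) with h | h
  exacts [⟨b, hb, h, subset_rfl⟩, ⟨a, ha, subset_rfl, h⟩]

include hκ in
theorem _root_.ZFSet.IsOrdinal.exists_forall_subset (h0 : ∅ ∈ κ) (G : ℕ → ZFSet.{u}) (N : ℕ)
    (hG : ∀ m < N, G m ∈ κ) : ∃ δ ∈ κ, ∀ m < N, G m ⊆ δ := by
  induction N with
  | zero => exact ⟨∅, h0, by simp⟩
  | succ N ih =>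
    obtain ⟨δ, hδ, hsub⟩ := ih fun m hm => hG m (by omega)
    obtain ⟨ε, hε, hδε, hNε⟩ := hκ.exists_superset_superset hδ (hG N (by omega))
    refine ⟨ε, hε, fun m hm => ?_⟩
    rcases Nat.lt_succ_iff_lt_or_eq.1 hm with hm | rfl
    exacts [(hsub m hm).trans hδε, hNε]

theorem empty_mem_of_ltClosed {W : ZFSet.{u}} (h0 : ∅ ∈ κ) (hWc : LtClosed κ W) : ∅ ∈ W :=
  hWc ∅ h0 ∅ ⟨empty_subset _, by simp⟩

include hκ hInf hReg in
theorem subset_of_ltClosed {W : ZFSet.{u}} (hW : W.IsTransitive) (hWc : LtClosed κ W) :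
    κ ⊆ W := by
  intro x hx
  obtain ⟨η, hη, hxη⟩ := hReg.exists_mem_of_mem hInf hx
  have h0 := empty_mem_of_ltClosed (hκ.empty_mem ⟨x, hx⟩) hWc
  have hf : graph (fun _ : η => ∅) ∈ W := hWc η hη _ (isFunc_graph fun _ => h0)
  have hp : pair x ∅ ∈ W := hW _ hf (pair_mem_graph.2 ⟨hxη, rfl⟩)
  exact hW _ (hW _ hp (by simp [pair])) (mem_singleton.2 rfl)

end Regular

theorem mk_iUnion_le_of_le {ι : Type (u + 1)} [Small.{u} ι] (f : ι → ZFSet.{u})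
    {c : Cardinal.{u + 1}} (hc : ℵ₀ ≤ c) (hι : #ι ≤ c) (hf : ∀ i, #(f i) ≤ c) :
    #(ZFSet.iUnion f) ≤ c :=
  calc #(ZFSet.iUnion f)
      = #(⋃ i, (f i : Set ZFSet.{u})) := by rw [← coe_iUnion]; rfl
    _ ≤ sum fun i => #(f i) := mk_iUnion_le_sum_mk
    _ ≤ sum fun _ : ι => c := sum_le_sum _ _ hf
    _ = #ι * c := sum_const' _ _
    _ ≤ c * c := mul_le_mul' hι le_rfl
    _ = c := mul_eq_self hc

theorem mk_union_le_of_le {x y : ZFSet.{u}} {c : Cardinal.{u + 1}} (hc : ℵ₀ ≤ c)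
    (hx : #x ≤ c) (hy : #y ≤ c) : #↥(x ∪ y) ≤ c :=
  calc #↥(x ∪ y)
      = #↥((x : Set ZFSet.{u}) ∪ y) := by rw [← coe_union]; rfl
    _ ≤ #↥x + #↥y := mk_union_le _ _
    _ ≤ c + c := add_le_add hx hy
    _ = c := add_eq_self hc

section Cardinal

variable {κ : ZFSet.{u}} (hκ : κ.IsOrdinal) (hInf : (κ : Set ZFSet.{u}).Infinite)
  (hReg : IsRegularOrd κ) (hPow : ∀ α β : ZFSet, α ∈ β → β ∈ κ → CardLE (funs β α) κ)

include hκ hInf hReg hPow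

theorem mk_funs_le_of_mem {η β : ZFSet.{u}} (hη : η ∈ κ) (hβ : β ∈ κ) : #(funs η β) ≤ #κ := by
  obtain ⟨γ, hγ, hηγ, hβγ⟩ := hκ.exists_superset_superset hη hβ
  obtain ⟨δ, hδ, hγδ⟩ := hReg.exists_mem_of_mem hInf hγ
  obtain ⟨δ', hδ', hδδ'⟩ := hReg.exists_mem_of_mem hInf hδ
  have hγ_sub : γ ⊆ δ := (hκ.mem hδ).subset_of_mem hγδ
  have hδ_sub : δ ⊆ δ' := (hκ.mem hδ').subset_of_mem hδδ'
  calc #(funs η β)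
      = #β ^ #η := mk_funs η β
    _ ≤ #δ ^ #η :=
        power_le_power_right (mk_le_mk_of_subset (coe_subset_coe.2 (hβγ.trans hγ_sub)))
    _ ≤ #δ ^ #δ' := power_le_power_left (mk_ne_zero_iff.2 ⟨⟨γ, hγδ⟩⟩)
        (mk_le_mk_of_subset (coe_subset_coe.2 ((hηγ.trans hγ_sub).trans hδ_sub)))
    _ = #(funs δ' δ) := (mk_funs δ' δ).symm
    _ ≤ #κ := cardLE_iff_mk_le.1 (hPow δ δ' hδδ' hδ')

theorem mk_funs_kappa_le {η : ZFSet.{u}} (hη : η ∈ κ) : #(funs η κ) ≤ #κ := by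
  have hsub : funs η κ ⊆ ⋃ β : κ, funs η β := by
    intro f hf
    obtain ⟨β, hβ, hbound⟩ := hReg η hη f (mem_funs.1 hf)
    refine mem_iUnion.2 ⟨⟨β, hβ⟩, mem_funs.2 ⟨fun p hp => ?_, (mem_funs.1 hf).2⟩⟩
    obtain ⟨a, ha, b, -, rfl⟩ := mem_prod.1 ((mem_funs.1 hf).1 hp)
    exact pair_mem_prod.2 ⟨ha, hbound a ha b hp⟩
  have hκ0 : ℵ₀ ≤ #κ := infinite_iff.1 hInf.to_subtype
  exact (mk_le_mk_of_subset (coe_subset_coe.2 hsub)).trans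
    (mk_iUnion_le_of_le _ hκ0 le_rfl fun β => mk_funs_le_of_mem hκ hInf hReg hPow hη β.2)

theorem mk_funs_le {η Y : ZFSet.{u}} (hη : η ∈ κ) (hY : #Y ≤ #κ) : #(funs η Y) ≤ #κ :=
  calc #(funs η Y)
      = #Y ^ #η := mk_funs η Y
    _ ≤ #κ ^ #η := power_le_power_right hY
    _ = #(funs η κ) := (mk_funs η κ).symm
    _ ≤ #κ := mk_funs_kappa_le hκ hInf hReg hPow hη

end Cardinal

def varBound : Fml → ℕ
  | .mem i j | .equal i j => max i j + 1
  | .not φ => varBound φ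
  | .and φ ψ => max (varBound φ) (varBound ψ)
  | .ex _ φ => varBound φ

theorem sat_congr (D : ZFSet) (φ : Fml) {v v' : ℕ → ZFSet}
    (h : ∀ m < varBound φ, v m = v' m) : Sat D φ v ↔ Sat D φ v' := by
  induction φ generalizing v v' with
  | mem i j | equal i j =>
    simp only [Sat, varBound] at h ⊢
    rw [h i (by omega), h j (by omega)]
  | not φ ih => exact not_congr (ih h)
  | and φ ψ ihφ ihψ =>
    simp only [varBound] at h
    exact and_congr (ihφ fun m hm => h m (by omega)) (ihψ fun m hm => h m (by omega))
  | ex n φ ih =>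
    refine exists_congr fun a => and_congr_right fun _ => ih fun m hm => ?_
    by_cases hmn : m = n
    · simp [hmn]
    · simp [Function.update_of_ne hmn, h m hm]

def encodeFml : Fml → ℕ
  | .mem i j => Nat.pair 0 (Nat.pair i j)
  | .equal i j => Nat.pair 1 (Nat.pair i j)
  | .not φ => Nat.pair 2 (encodeFml φ)
  | .and φ ψ => Nat.pair 3 (Nat.pair (encodeFml φ) (encodeFml ψ))
  | .ex n φ => Nat.pair 4 (Nat.pair n (encodeFml φ))

theorem encodeFml_injective : Function.Injective encodeFml := by
  intro φ ψ h
  induction φ generalizing ψ <;> cases ψ <;> simp [encodeFml, Nat.pair_eq_pair] at h ⊢ <;> grind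

instance : Countable Fml := encodeFml_injective.countable

theorem elemSub_of_forall_exists {X W : ZFSet} (hXW : X ⊆ W)
    (h : ∀ (φ : Fml) (n : ℕ) (v : ℕ → ZFSet), (∀ m, v m ∈ X) →
      (∃ a ∈ W, Sat W φ (Function.update v n a)) →
      ∃ a ∈ X, Sat W φ (Function.update v n a)) :
    ElemSub X W := by
  refine ⟨hXW, fun φ => ?_⟩
  induction φ with
  | mem i j | equal i j => exact fun _ _ => Iff.rfl
  | not φ ih => exact fun v hv => not_congr (ih v hv)
  | and φ ψ ihφ ihψ => exact fun v hv => and_congr (ihφ v hv) (ihψ v hv)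
  | ex n φ ih =>
    have hupd : ∀ v a, (∀ m, v m ∈ X) → a ∈ X → ∀ m, Function.update v n a m ∈ X :=
      fun v _ hv ha => (Function.forall_update_iff v fun _ y => y ∈ X).2 ⟨ha, fun m _ => hv m⟩
    intro v hv
    constructor
    · rintro ⟨a, haX, hsat⟩
      exact ⟨a, hXW haX, (ih _ (hupd v a hv haX)).1 hsat⟩
    · rintro hW
      obtain ⟨a, haX, hsat⟩ := h φ n v hv hW
      exact ⟨a, haX, (ih _ (hupd v a hv haX)).2 hsat⟩

noncomputable def witness (W : ZFSet) (φ : Fml) (n : ℕ) (v : ℕ → ZFSet) : ZFSet :=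
  Classical.epsilon fun a => a ∈ W ∧ Sat W φ (Function.update v n a)

theorem witness_spec {W : ZFSet} {φ : Fml} {n : ℕ} {v : ℕ → ZFSet}
    (h : ∃ a ∈ W, Sat W φ (Function.update v n a)) :
    witness W φ n v ∈ W ∧ Sat W φ (Function.update v n (witness W φ n v)) :=
  Classical.epsilon_spec (p := fun a => a ∈ W ∧ Sat W φ (Function.update v n a)) h

-- Parameters are read off finite lists, which keeps `skolemSet W Y` of size `≤ |Y| + ℵ₀`;
-- by `sat_congr` no witness is lost.
noncomputable def skolemSet (W Y : ZFSet.{u}) : ZFSet.{u} :=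
  range fun p : (Fml × ℕ) × List Y =>
    witness W p.1.1 p.1.2 fun m => (p.2.map Subtype.val).getD m ∅

/-- The intersection with `W` discards the junk values of `witness`. -/
noncomputable def hullStep (κ W Y : ZFSet.{u}) : ZFSet.{u} :=
  W ∩ (Y ∪ skolemSet W Y ∪ ⋃ η : κ, funs η Y)

noncomputable def stage (κ W S α : ZFSet.{u}) : ZFSet.{u} :=
  hullStep κ W (S ∪ ⋃ β : α, stage κ W S β)
termination_by α
decreasing_by exact β.2

noncomputable def hull (κ W S : ZFSet.{u}) : ZFSet.{u} :=
  ⋃ α : κ, stage κ W S α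

section Hull

variable {κ W S : ZFSet.{u}}

theorem hullStep_subset (Y : ZFSet.{u}) : hullStep κ W Y ⊆ W :=
  fun _ hz => (mem_inter.1 hz).1

theorem subset_hullStep {Y : ZFSet.{u}} (hY : Y ⊆ W) : Y ⊆ hullStep κ W Y :=
  fun _ hz => mem_inter.2 ⟨hY hz, mem_union.2 (Or.inl (mem_union.2 (Or.inl hz)))⟩

theorem skolemSet_mono {Y Y' : ZFSet.{u}} (h : Y ⊆ Y') : skolemSet W Y ⊆ skolemSet W Y' := by
  intro z hz
  obtain ⟨⟨p, L⟩, rfl⟩ := mem_range.1 hz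
  refine mem_range.2 ⟨⟨p, L.map fun a : Y => (⟨a, h a.2⟩ : Y')⟩, ?_⟩
  simp [List.map_map, Function.comp_def]

theorem hullStep_mono {Y Y' : ZFSet.{u}} (h : Y ⊆ Y') : hullStep κ W Y ⊆ hullStep κ W Y' := by
  intro z hz
  simp only [hullStep, mem_inter, mem_union, mem_iUnion, mem_funs] at hz ⊢
  obtain ⟨hzW, (hzY | hzSk) | ⟨η, hzη⟩⟩ := hz
  · exact ⟨hzW, Or.inl (Or.inl (h hzY))⟩
  · exact ⟨hzW, Or.inl (Or.inr (skolemSet_mono h hzSk))⟩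
  · exact ⟨hzW, Or.inr ⟨η, IsFunc.mono hzη h⟩⟩

theorem stage_subset (α : ZFSet.{u}) : stage κ W S α ⊆ W := by
  rw [stage]; exact hullStep_subset _

theorem stage_mono {α β : ZFSet.{u}} (h : β ⊆ α) : stage κ W S β ⊆ stage κ W S α := by
  rw [stage, stage]
  refine hullStep_mono fun z hz => ?_
  simp only [mem_union, mem_iUnion] at hz ⊢
  obtain hzS | ⟨γ, hγ⟩ := hz
  · exact Or.inl hzS
  · exact Or.inr ⟨⟨γ, h γ.2⟩, hγ⟩

theorem hullStep_stage_subset {α β : ZFSet.{u}} (h : β ∈ α) :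
    hullStep κ W (stage κ W S β) ⊆ stage κ W S α := by
  rw [stage.eq_1 κ W S α]
  exact hullStep_mono fun z hz => mem_union.2 (Or.inr (mem_iUnion.2 ⟨⟨β, h⟩, hz⟩))

theorem subset_stage (hS : S ⊆ W) (α : ZFSet.{u}) : S ⊆ stage κ W S α := by
  rw [stage]
  refine fun z hz => subset_hullStep (fun y hy => ?_) (mem_union.2 (Or.inl hz))
  rcases mem_union.1 hy with hy | hy
  · exact hS hy
  · obtain ⟨β, hyβ⟩ := mem_iUnion.1 hy
    exact stage_subset _ hyβ

theorem mem_hull {x : ZFSet.{u}} : x ∈ hull κ W S ↔ ∃ α ∈ κ, x ∈ stage κ W S α := by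
  simp [hull]

theorem hull_subset : hull κ W S ⊆ W := by
  intro x hx
  obtain ⟨α, -, hxα⟩ := mem_hull.1 hx
  exact stage_subset α hxα

theorem subset_hull (h0 : ∅ ∈ κ) (hS : S ⊆ W) : S ⊆ hull κ W S :=
  fun _ hx => mem_hull.2 ⟨∅, h0, subset_stage hS ∅ hx⟩

end Hull

section HullOfRegular

variable {κ W S : ZFSet.{u}} (hκ : κ.IsOrdinal) (hInf : (κ : Set ZFSet.{u}).Infinite)
  (hReg : IsRegularOrd κ)

include hInf hReg

theorem mem_hull_of_mem_hullStep {δ x : ZFSet.{u}} (hδ : δ ∈ κ)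
    (hx : x ∈ hullStep κ W (stage κ W S δ)) : x ∈ hull κ W S := by
  obtain ⟨γ, hγ, hδγ⟩ := hReg.exists_mem_of_mem hInf hδ
  exact mem_hull.2 ⟨γ, hγ, hullStep_stage_subset hδγ hx⟩

include hκ

theorem exists_mem_hull_sat (φ : Fml) (n : ℕ) (v : ℕ → ZFSet.{u})
    (hv : ∀ m, v m ∈ hull κ W S) (hex : ∃ a ∈ W, Sat W φ (Function.update v n a)) :
    ∃ a ∈ hull κ W S, Sat W φ (Function.update v n a) := by
  choose G hGκ hG using fun m => mem_hull.1 (hv m)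
  obtain ⟨δ, hδ, hGδ⟩ :=
    hκ.exists_forall_subset (hκ.empty_mem hInf.nonempty) G (varBound φ) fun m _ => hGκ m
  let L : List (stage κ W S δ) :=
    List.ofFn fun i : Fin (varBound φ) => ⟨v i, stage_mono (hGδ i i.2) (hG i)⟩
  let v' : ℕ → ZFSet.{u} := fun m => (L.map Subtype.val).getD m ∅
  have hv' : ∀ m < varBound φ, v' m = v m := fun m hm => by
    simp [v', L, hm]
  have hsat : ∀ a, Sat W φ (Function.update v' n a) ↔ Sat W φ (Function.update v n a) :=
    fun a => sat_congr W φ fun m hm => by simp only [Function.update_apply, hv' m hm]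
  obtain ⟨a, haW, hsat_a⟩ := hex
  obtain ⟨hwW, hw⟩ := witness_spec ⟨a, haW, (hsat a).2 hsat_a⟩
  have hw_step : witness W φ n v' ∈ hullStep κ W (stage κ W S δ) :=
    mem_inter.2 ⟨hwW, mem_union.2 (Or.inl (mem_union.2
      (Or.inr (mem_range.2 ⟨((φ, n), L), rfl⟩))))⟩
  exact ⟨_, mem_hull_of_mem_hullStep hInf hReg hδ hw_step, (hsat _).1 hw⟩

theorem ltClosed_hull (hWc : LtClosed κ W) : LtClosed κ (hull κ W S) := by
  intro η hη f hf
  have hval : ∀ a : η, ∃ α ∈ κ, ∀ y, pair a y ∈ f → y ∈ stage κ W S α := by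
    intro a
    obtain ⟨y, hy, huniq⟩ := hf.2 a a.2
    obtain ⟨α, hα, hyα⟩ := mem_hull.1 (pair_mem_prod.1 (hf.1 hy)).2
    exact ⟨α, hα, fun y' hy' => huniq y' hy' ▸ hyα⟩
  choose G hGκ hG using hval
  obtain ⟨β, hβ, hGβ⟩ := hReg.exists_forall_mem hη G hGκ
  have hfβ : IsFunc η (stage κ W S β) f := by
    refine ⟨fun p hp => ?_, hf.2⟩
    obtain ⟨a, ha, y, -, rfl⟩ := mem_prod.1 (hf.1 hp)
    exact pair_mem_prod.2
      ⟨ha, stage_mono ((hκ.mem hβ).subset_of_mem (hGβ ⟨a, ha⟩)) (hG ⟨a, ha⟩ y hp)⟩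
  have hfW : f ∈ W := hWc η hη f (IsFunc.mono hf hull_subset)
  exact mem_hull_of_mem_hullStep hInf hReg hβ
    (mem_inter.2 ⟨hfW, mem_union.2 (Or.inr (mem_iUnion.2 ⟨⟨η, hη⟩, mem_funs.2 hfβ⟩))⟩)

end HullOfRegular

theorem mk_skolemSet_le {W Y : ZFSet.{u}} {c : Cardinal.{u + 1}} (hc : ℵ₀ ≤ c) (hY : #Y ≤ c) :
    #(skolemSet W Y) ≤ c :=
  calc #(skolemSet W Y)
      = #(Set.range fun p : (Fml × ℕ) × List Y =>
          witness W p.1.1 p.1.2 fun m => (p.2.map Subtype.val).getD m ∅) := by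
        rw [skolemSet, ← coe_range]; rfl
    _ ≤ #((Fml × ℕ) × List Y) := mk_range_le
    _ = lift #(Fml × ℕ) * #(List Y) := by simp [mk_prod]
    _ ≤ c * c := mul_le_mul' (lift_le_aleph0.2 mk_le_aleph0 |>.trans hc)
        ((mk_list_le_max _).trans (max_le hc hY))
    _ = c := mul_eq_self hc

section CardinalityOfHull

variable {κ W S : ZFSet.{u}} (hκ : κ.IsOrdinal) (hInf : (κ : Set ZFSet.{u}).Infinite)
  (hReg : IsRegularOrd κ) (hPow : ∀ α β : ZFSet, α ∈ β → β ∈ κ → CardLE (funs β α) κ)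

include hκ hInf hReg hPow

theorem mk_hullStep_le {Y : ZFSet.{u}} (hY : #Y ≤ #κ) : #(hullStep κ W Y) ≤ #κ := by
  have hκ0 : ℵ₀ ≤ #κ := infinite_iff.1 hInf.to_subtype
  refine (mk_le_mk_of_subset (coe_subset_coe.2 fun z hz => (mem_inter.1 hz).2)).trans ?_
  refine mk_union_le_of_le hκ0 (mk_union_le_of_le hκ0 hY (mk_skolemSet_le hκ0 hY)) ?_
  exact mk_iUnion_le_of_le _ hκ0 le_rfl fun η => mk_funs_le hκ hInf hReg hPow η.2 hY

theorem mk_stage_le (hS : #S ≤ #κ) (α : ZFSet.{u}) (hα : α ∈ κ) : #(stage κ W S α) ≤ #κ := by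
  have hκ0 : ℵ₀ ≤ #κ := infinite_iff.1 hInf.to_subtype
  induction α using ZFSet.inductionOn with
  | _ α ih =>
    rw [stage]
    have hα_le : #α ≤ #κ := mk_le_mk_of_subset (coe_subset_coe.2 (hκ.subset_of_mem hα))
    exact mk_hullStep_le hκ hInf hReg hPow (mk_union_le_of_le hκ0 hS
      (mk_iUnion_le_of_le (fun β : α => stage κ W S β) hκ0 hα_le
        fun β => ih β β.2 (hκ.mem_trans β.2 hα)))

theorem mk_hull_le (hS : #S ≤ #κ) : #(hull κ W S) ≤ #κ :=
  mk_iUnion_le_of_le _ (infinite_iff.1 hInf.to_subtype) le_rfl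
    fun α => mk_stage_le hκ hInf hReg hPow hS α α.2

end CardinalityOfHull

theorem stmt8 (κ : ZFSet) (hOrd : IsOrd κ) (hInf : κ.toSet.Infinite)
    (hReg : ∀ α ∈ κ, ∀ f, ZFSet.IsFunc α κ f →
      ∃ β ∈ κ, ∀ x ∈ α, ∀ o, ZFSet.pair x o ∈ f → o ∈ β)
    (hPow : ∀ α β : ZFSet, α ∈ β → β ∈ κ → CardLE (ZFSet.funs β α) κ)
    (W : ZFSet) (hW : W.IsTransitive) (hWc : LtClosed κ W)
    (A : ZFSet) (hA : A ⊆ κ) :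
    ∃ X : ZFSet, X ⊆ W ∧ ElemSub X W ∧ A ⊆ X ∧ CardLE X κ ∧ LtClosed κ X := by
  have hκ : κ.IsOrdinal := hOrd.isOrdinal
  have hAW : A ⊆ W := fun _ ha => subset_of_ltClosed hκ hInf hReg hW hWc (hA ha)
  refine ⟨hull κ W A, hull_subset, ?_, subset_hull (hκ.empty_mem hInf.nonempty) hAW, ?_,
    ltClosed_hull hκ hInf hReg hWc⟩
  · exact elemSub_of_forall_exists hull_subset (exists_mem_hull_sat hκ hInf hReg)
  · exact cardLE_iff_mk_le.2
      (mk_hull_le hκ hInf hReg hPow (mk_le_mk_of_subset (coe_subset_coe.2 hA)))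

end NairianModels
end
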